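/- arXiv:2110.14206 — 2 statements merged into one kernel-verified Lean document; each statement's English description precedes it below -/
import Mathlib

section
/- For any a ∉ B₀, f(a') = -f(a), where a' is obtained from a by negating all entries a_{±r} with 1 ≤ r ≤ T(a) and leaving a₀ and entries with index magnitude greater than T(a) unchanged; here T(a) is the largest r with a_r ≠ a_{-r}. -/
open scoped Classical
open Finset

noncomputable section

/-- Bit strings in {±1}^{2p+1}, indexed by integers -p ≤ j ≤ p (Bool-encoded). -/
def QStr (p : ℕ) : Type := {j : ℤ // j ∈ Finset.Icc (-(p : ℤ)) (p : ℤ)} → Bool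

instance (p : ℕ) : Fintype (QStr p) := by unfold QStr; infer_instance
instance (p : ℕ) : DecidableEq (QStr p) := by unfold QStr; infer_instance

/-- The ±1 entry of the string `a` at index `j` (1 outside the index range). -/
def ent (p : ℕ) (a : QStr p) (j : ℤ) : ℝ :=
  if h : j ∈ Finset.Icc (-(p : ℤ)) (p : ℤ) then (if a ⟨j, h⟩ then 1 else -1) else 1

/-- Transfer matrix element ⟨x|e^{iβX}|y⟩ = cos β if x = y, i sin β otherwise. -/
def bket (x y : ℝ) (β : ℝ) : ℂ :=
  if x = y then (Real.cos β : ℂ) else Complex.I * (Real.sin β : ℂ)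

/-- f(a) = (1/2)⟨a₁|e^{iβ₁X}|a₂⟩⋯⟨a_p|e^{iβ_pX}|a₀⟩⟨a₀|e^{-iβ_pX}|a_{-p}⟩⋯⟨a_{-2}|e^{-iβ₁X}|a_{-1}⟩. -/
def fQ (p : ℕ) (β : ℕ → ℝ) (a : QStr p) : ℂ :=
  (1 / 2 : ℂ) * ∏ r ∈ Finset.Icc 1 p,
    (bket (ent p a (r : ℤ)) (ent p a (if r = p then 0 else (r : ℤ) + 1)) (β r) *
      bket (ent p a (if r = p then 0 else -((r : ℤ) + 1))) (ent p a (-(r : ℤ))) (-(β r)))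

/-- Γ_r = γ_r, Γ₀ = 0, Γ_{-r} = -γ_r. -/
def Gam (γ : ℕ → ℝ) (j : ℤ) : ℝ :=
  if 0 < j then γ j.toNat else if j < 0 then -(γ (-j).toNat) else 0

/-- Γ·(ab) = Σ_{j=-p}^{p} Γ_j a_j b_j. -/
def Gdot (p : ℕ) (γ : ℕ → ℝ) (a b : QStr p) : ℝ :=
  ∑ j ∈ Finset.Icc (-(p : ℤ)) (p : ℤ), Gam γ j * ent p a j * ent p b j

/-- a ∈ B₀ iff a_{-r} = a_r for all 1 ≤ r ≤ p. -/
def symB (p : ℕ) (a : QStr p) : Prop :=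
  ∀ r ∈ Finset.Icc (1 : ℤ) (p : ℤ), ent p a (-r) = ent p a r

/-- T(a): the largest 1 ≤ r ≤ p with a_r ≠ a_{-r}, and 0 for a ∈ B₀. -/
def Tof (p : ℕ) (a : QStr p) : ℤ :=
  WithBot.unbotD 0 (((Finset.Icc (1 : ℤ) (p : ℤ)).filter (fun r => ent p a r ≠ ent p a (-r))).max)

/-- The string a' : negate entries with 1 ≤ |j| ≤ T(a), keep the rest. -/
def primeQ (p : ℕ) (a : QStr p) : QStr p :=
  fun j => if 1 ≤ |j.1| ∧ |j.1| ≤ Tof p a then !(a j) else a j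

/-- Entrywise negation -a. -/
def negQ (p : ℕ) (a : QStr p) : QStr p := fun j => !(a j)

/-- Index reversal ā, with ā_j = a_{-j}. -/
def revQ (p : ℕ) (a : QStr p) : QStr p :=
  fun j => a ⟨-j.1, by have h := j.2; simp only [Finset.mem_Icc] at h ⊢; omega⟩

/-- The finite-D iteration (cosine form):
H_D^{(0)}(a) = 1, H_D^{(m)}(a) = (Σ_b f(b) H_D^{(m-1)}(b) cos[(1/√D) Γ·(ab)])^D. -/
def HD (p : ℕ) (β γ : ℕ → ℝ) (D : ℕ) : ℕ → QStr p → ℂ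
  | 0, _ => 1
  | m + 1, a =>
      (∑ b : QStr p, fQ p β b * HD p β γ D m b *
        (Real.cos ((1 / Real.sqrt D) * Gdot p γ a b) : ℂ)) ^ D

/-- The finite-D iteration (exponential form):
H_D^{(0)}(a) = 1, H_D^{(m)}(a) = (Σ_b f(b) H_D^{(m-1)}(b) exp[-(i/√D) Γ·(ab)])^D. -/
def HDexp (p : ℕ) (β γ : ℕ → ℝ) (D : ℕ) : ℕ → QStr p → ℂ
  | 0, _ => 1
  | m + 1, a =>
      (∑ b : QStr p, fQ p β b * HDexp p β γ D m b *
        Complex.exp (-(Complex.I / (Real.sqrt D : ℂ)) * (Gdot p γ a b : ℂ))) ^ D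

/-- The D → ∞ iteration: H^{(0)}(a) = 1,
H^{(m)}(a) = exp(-(1/2) Σ_b f(b) H^{(m-1)}(b) (Γ·(ab))²). -/
def Hinf (p : ℕ) (β γ : ℕ → ℝ) : ℕ → QStr p → ℂ
  | 0, _ => 1
  | m + 1, a =>
      Complex.exp (-(1 / 2 : ℂ) *
        ∑ b : QStr p, fQ p β b * Hinf p β γ m b * ((Gdot p γ a b) ^ 2 : ℝ))

/-- G^{(m)}_{j,k} = Σ_a f(a) H^{(m)}(a) a_j a_k, with H^{(m)} the D → ∞ iterates. -/
def GmatH (p : ℕ) (β γ : ℕ → ℝ) (m : ℕ) (j k : ℤ) : ℂ :=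
  ∑ a : QStr p, fQ p β a * Hinf p β γ m a * (ent p a j : ℂ) * (ent p a k : ℂ)

/-- The recursively-defined G matrices: G^{(0)}_{j,k} = Σ_a f(a) a_j a_k and
G^{(m)}_{j,k} = Σ_a f(a) a_j a_k exp(-(1/2) Σ_{j',k'} G^{(m-1)}_{j',k'} Γ_{j'} Γ_{k'} a_{j'} a_{k'}). -/
def GmatR (p : ℕ) (β γ : ℕ → ℝ) : ℕ → ℤ → ℤ → ℂ
  | 0, j, k => ∑ a : QStr p, fQ p β a * (ent p a j : ℂ) * (ent p a k : ℂ)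
  | m + 1, j, k =>
      ∑ a : QStr p, fQ p β a * (ent p a j : ℂ) * (ent p a k : ℂ) *
        Complex.exp (-(1 / 2 : ℂ) *
          ∑ j' ∈ Finset.Icc (-(p : ℤ)) (p : ℤ), ∑ k' ∈ Finset.Icc (-(p : ℤ)) (p : ℤ),
            GmatR p β γ m j' k' * (Gam γ j' : ℂ) * (Gam γ k' : ℂ) *
              (ent p a j' : ℂ) * (ent p a k' : ℂ))

/-- H^{(m+1)}(a) expressed through G^{(m)}:
H^{(m+1)}(a) = exp(-(1/2) Σ_{j',k'} G^{(m)}_{j',k'} Γ_{j'} Γ_{k'} a_{j'} a_{k'}). -/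
def HG (p : ℕ) (β γ : ℕ → ℝ) (m : ℕ) (a : QStr p) : ℂ :=
  Complex.exp (-(1 / 2 : ℂ) *
    ∑ j' ∈ Finset.Icc (-(p : ℤ)) (p : ℤ), ∑ k' ∈ Finset.Icc (-(p : ℤ)) (p : ℤ),
      GmatR p β γ m j' k' * (Gam γ j' : ℂ) * (Gam γ k' : ℂ) *
        (ent p a j' : ℂ) * (ent p a k' : ℂ))

end

lemma bket_neg_neg (x y β : ℝ) : bket (-x) (-y) β = bket x y β := by
  simp [bket, neg_inj]

lemma ent_pm (p : ℕ) (a : QStr p) (j : ℤ) : ent p a j = 1 ∨ ent p a j = -1 := by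
  unfold ent
  split
  · split <;> simp
  · exact Or.inl rfl

lemma bket_key (u v β : ℝ) (hu : u = 1 ∨ u = -1) (hv : v = 1 ∨ v = -1) :
    bket (-u) v β * bket v u (-β) = -(bket u v β * bket v (-u) (-β)) := by
  rcases hu with rfl | rfl <;> rcases hv with rfl | rfl <;>
    norm_num [bket, Real.cos_neg, Real.sin_neg] <;> ring

lemma ent_prime (p : ℕ) (a : QStr p) (j : ℤ) (h : j ∈ Finset.Icc (-(p:ℤ)) (p:ℤ)) :
    ent p (primeQ p a) j =
      if 1 ≤ |j| ∧ |j| ≤ Tof p a then -(ent p a j) else ent p a j := by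
  unfold ent primeQ
  rw [dif_pos h, dif_pos h]
  by_cases hc : 1 ≤ |j| ∧ |j| ≤ Tof p a
  · rw [if_pos hc, if_pos hc]
    cases a ⟨j, h⟩ <;> simp
  · rw [if_neg hc, if_neg hc]

lemma memIccZ (p : ℕ) (j : ℤ) (h1 : -(p:ℤ) ≤ j) (h2 : j ≤ p) :
    j ∈ Finset.Icc (-(p:ℤ)) (p:ℤ) := Finset.mem_Icc.2 ⟨h1, h2⟩

lemma ent_prime_out (p : ℕ) (a : QStr p) (j : ℤ)
    (hj : j ∈ Finset.Icc (-(p:ℤ)) (p:ℤ)) (h : ¬ (1 ≤ |j| ∧ |j| ≤ Tof p a)) :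
    ent p (primeQ p a) j = ent p a j := by
  rw [ent_prime p a j hj, if_neg h]

lemma ent_prime_in (p : ℕ) (a : QStr p) (j : ℤ)
    (hj : j ∈ Finset.Icc (-(p:ℤ)) (p:ℤ)) (h1 : 1 ≤ |j|) (h2 : |j| ≤ Tof p a) :
    ent p (primeQ p a) j = -(ent p a j) := by
  rw [ent_prime p a j hj, if_pos ⟨h1, h2⟩]

/-- for a ∉ B₀, f(a') = -f(a). -/
theorem stmt_4 (p : ℕ) (hp : 1 ≤ p) (β : ℕ → ℝ) (a : QStr p) (ha : ¬ symB p a) :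
    fQ p β (primeQ p a) = - fQ p β a := by
  classical
  have hS : ((Finset.Icc (1:ℤ) (p:ℤ)).filter
      (fun r => ent p a r ≠ ent p a (-r))).Nonempty := by
    rw [symB] at ha; push_neg at ha
    obtain ⟨r, hr, hne⟩ := ha
    exact ⟨r, Finset.mem_filter.2 ⟨hr, fun h => hne h.symm⟩⟩
  obtain ⟨M, hM⟩ := Finset.max_of_nonempty hS
  have hTof : Tof p a = M := by
    simp only [Tof, hM, WithBot.unbotD_coe]
  have hMS := Finset.mem_of_max hM
  have hMf := Finset.mem_filter.1 hMS
  have hM1 : (1:ℤ) ≤ M ∧ M ≤ p := Finset.mem_Icc.1 hMf.1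
  have hMne : ent p a M ≠ ent p a (-M) := hMf.2
  have hmax : ∀ r : ℤ, r ∈ Finset.Icc (1:ℤ) (p:ℤ) →
      ent p a r ≠ ent p a (-r) → r ≤ M := fun r hr hn =>
    WithBot.coe_le_coe.1 (hM ▸ Finset.le_max (Finset.mem_filter.2 ⟨hr, hn⟩))
  obtain ⟨t, ht⟩ : ∃ t : ℕ, (t:ℤ) = M := ⟨M.toNat, by omega⟩
  have ht1 : 1 ≤ t := by omega
  have htp : t ≤ p := by omega
  have htmem : t ∈ Finset.Icc 1 p := Finset.mem_Icc.2 ⟨ht1, htp⟩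
  -- entry facts at the T-th factor
  have hopp : ent p a (-(t:ℤ)) = -(ent p a (t:ℤ)) := by
    have hne' : ent p a (t:ℤ) ≠ ent p a (-(t:ℤ)) := by rw [ht]; exact hMne
    rcases ent_pm p a (t:ℤ) with h | h <;> rcases ent_pm p a (-(t:ℤ)) with h' | h' <;>
      rw [h, h'] at hne' ⊢ <;> first | exact absurd rfl hne' | norm_num
  have e1 : ent p (primeQ p a) (t:ℤ) = -(ent p a (t:ℤ)) :=
    ent_prime_in p a _ (memIccZ p _ (by omega) (by omega))
      (by rw [Int.abs_natCast]; omega) (by rw [Int.abs_natCast, hTof]; omega)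
  have e2 : ent p (primeQ p a) (-(t:ℤ)) = ent p a (t:ℤ) := by
    rw [ent_prime_in p a _ (memIccZ p _ (by omega) (by omega))
      (by rw [abs_neg, Int.abs_natCast]; omega)
      (by rw [abs_neg, Int.abs_natCast, hTof]; omega), hopp, neg_neg]
  have e3 : ent p (primeQ p a) (if t = p then 0 else (t:ℤ)+1)
      = ent p a (if t = p then 0 else (t:ℤ)+1) := by
    by_cases hq : t = p
    · rw [if_pos hq, ent_prime_out p a _ (memIccZ p _ (by omega) (by omega))
        (by norm_num)]
    · rw [if_neg hq, ent_prime_out p a _ (memIccZ p _ (by omega) (by omega))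
        (by rw [abs_of_nonneg (by omega), hTof]; omega)]
  have e4 : ent p (primeQ p a) (if t = p then 0 else -((t:ℤ)+1))
      = ent p a (if t = p then 0 else -((t:ℤ)+1)) := by
    by_cases hq : t = p
    · rw [if_pos hq, ent_prime_out p a _ (memIccZ p _ (by omega) (by omega))
        (by norm_num)]
    · rw [if_neg hq, ent_prime_out p a _ (memIccZ p _ (by omega) (by omega))
        (by rw [abs_neg, abs_of_nonneg (by omega), hTof]; omega)]
  have e5 : ent p a (if t = p then 0 else -((t:ℤ)+1))
      = ent p a (if t = p then 0 else (t:ℤ)+1) := by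
    by_cases hq : t = p
    · rw [if_pos hq, if_pos hq]
    · rw [if_neg hq, if_neg hq]
      by_contra h
      have := hmax ((t:ℤ)+1) (Finset.mem_Icc.2 ⟨by omega, by omega⟩) (Ne.symm h)
      omega
  -- the T-th factor flips sign
  have key : bket (ent p (primeQ p a) (t:ℤ))
        (ent p (primeQ p a) (if t = p then 0 else (t:ℤ)+1)) (β t) *
      bket (ent p (primeQ p a) (if t = p then 0 else -((t:ℤ)+1)))
        (ent p (primeQ p a) (-(t:ℤ))) (-(β t))
      = -(bket (ent p a (t:ℤ)) (ent p a (if t = p then 0 else (t:ℤ)+1)) (β t) *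
      bket (ent p a (if t = p then 0 else -((t:ℤ)+1))) (ent p a (-(t:ℤ))) (-(β t))) := by
    rw [e1, e2, e3, e4, e5, hopp]
    exact bket_key _ _ _ (ent_pm p a _) (ent_pm p a _)
  -- all other factors are unchanged
  have hprod : ∀ r ∈ (Finset.Icc 1 p).erase t,
      bket (ent p (primeQ p a) (r:ℤ))
        (ent p (primeQ p a) (if r = p then 0 else (r:ℤ)+1)) (β r) *
      bket (ent p (primeQ p a) (if r = p then 0 else -((r:ℤ)+1)))
        (ent p (primeQ p a) (-(r:ℤ))) (-(β r))
      = bket (ent p a (r:ℤ)) (ent p a (if r = p then 0 else (r:ℤ)+1)) (β r) *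
      bket (ent p a (if r = p then 0 else -((r:ℤ)+1))) (ent p a (-(r:ℤ))) (-(β r)) := by
    intro r hr
    have hrne := Finset.ne_of_mem_erase hr
    have hrm := Finset.mem_Icc.1 (Finset.mem_of_mem_erase hr)
    rcases Nat.lt_or_ge r t with hlt | hge
    · -- r < t : all four entries negated
      have hrp : r ≠ p := by omega
      rw [if_neg hrp, if_neg hrp]
      rw [ent_prime_in p a (r:ℤ) (memIccZ p _ (by omega) (by omega))
          (by rw [Int.abs_natCast]; omega) (by rw [Int.abs_natCast, hTof]; omega),
        ent_prime_in p a ((r:ℤ)+1) (memIccZ p _ (by omega) (by omega))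
          (by rw [abs_of_nonneg (by omega)]; omega)
          (by rw [abs_of_nonneg (by omega), hTof]; omega),
        ent_prime_in p a (-((r:ℤ)+1)) (memIccZ p _ (by omega) (by omega))
          (by rw [abs_neg, abs_of_nonneg (by omega)]; omega)
          (by rw [abs_neg, abs_of_nonneg (by omega), hTof]; omega),
        ent_prime_in p a (-(r:ℤ)) (memIccZ p _ (by omega) (by omega))
          (by rw [abs_neg, Int.abs_natCast]; omega)
          (by rw [abs_neg, Int.abs_natCast, hTof]; omega),
        bket_neg_neg, bket_neg_neg]
    · -- t < r : no entry changes
      have hgt : t < r := by omega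
      have g1 : ent p (primeQ p a) (r:ℤ) = ent p a (r:ℤ) :=
        ent_prime_out p a _ (memIccZ p _ (by omega) (by omega))
          (by rw [Int.abs_natCast, hTof]; omega)
      have g2 : ent p (primeQ p a) (-(r:ℤ)) = ent p a (-(r:ℤ)) :=
        ent_prime_out p a _ (memIccZ p _ (by omega) (by omega))
          (by rw [abs_neg, Int.abs_natCast, hTof]; omega)
      have g3 : ent p (primeQ p a) (if r = p then 0 else (r:ℤ)+1)
          = ent p a (if r = p then 0 else (r:ℤ)+1) := by
        by_cases hq : r = p
        · rw [if_pos hq, ent_prime_out p a _ (memIccZ p _ (by omega) (by omega))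
            (by norm_num)]
        · rw [if_neg hq, ent_prime_out p a _ (memIccZ p _ (by omega) (by omega))
            (by rw [abs_of_nonneg (by omega), hTof]; omega)]
      have g4 : ent p (primeQ p a) (if r = p then 0 else -((r:ℤ)+1))
          = ent p a (if r = p then 0 else -((r:ℤ)+1)) := by
        by_cases hq : r = p
        · rw [if_pos hq, ent_prime_out p a _ (memIccZ p _ (by omega) (by omega))
            (by norm_num)]
        · rw [if_neg hq, ent_prime_out p a _ (memIccZ p _ (by omega) (by omega))
            (by rw [abs_neg, abs_of_nonneg (by omega), hTof]; omega)]
      rw [g1, g2, g3, g4]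
  unfold fQ
  rw [← Finset.mul_prod_erase _ _ htmem, ← Finset.mul_prod_erase _ _ htmem,
    Finset.prod_congr rfl hprod, key]
  ring
end

section
/- For all 0 ≤ m ≤ p, if a ∈ B₀ (i.e., a_{-r} = a_r for all 1 ≤ r ≤ p) then H_D^{(m)}(a) = 1. -/
open scoped Classical
open Finset

noncomputable section

namespace S6

variable {p : ℕ}

lemma ent_out {a : QStr p} {j : ℤ} (h : j ∉ Finset.Icc (-(p:ℤ)) (p:ℤ)) : ent p a j = 1 :=
  dif_neg h

lemma ent_mem {a : QStr p} {j : ℤ} (h : j ∈ Finset.Icc (-(p:ℤ)) (p:ℤ)) :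
    ent p a j = if a ⟨j, h⟩ then 1 else -1 := dif_pos h

lemma ent_pm (a : QStr p) (j : ℤ) : ent p a j = 1 ∨ ent p a j = -1 := by
  unfold ent
  split
  · split <;> simp
  · left; rfl

lemma ent_ne_neg (a : QStr p) (j : ℤ) : ent p a j ≠ -(ent p a j) := by
  rcases ent_pm a j with h | h <;> rw [h] <;> norm_num

/-- flip the entries in the (symmetric) index set S -/
def flp (p : ℕ) (S : ℤ → Prop) (a : QStr p) : QStr p :=
  fun j => if S j.1 then !(a j) else a j

lemma flp_flp (S : ℤ → Prop) (a : QStr p) : flp p S (flp p S a) = a := by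
  funext j
  by_cases h : S j.1 <;> simp [flp, h]

lemma flp_invol (S : ℤ → Prop) : Function.Involutive (flp p S) := flp_flp S

lemma ent_flp {S : ℤ → Prop} {j : ℤ} (hj : j ∈ Finset.Icc (-(p:ℤ)) (p:ℤ)) (a : QStr p) :
    ent p (flp p S a) j = if S j then -(ent p a j) else ent p a j := by
  rw [ent_mem hj, ent_mem hj]
  by_cases h : S j
  · simp only [h, if_true]
    show (if (if S j then !(a ⟨j, hj⟩) else a ⟨j, hj⟩) then (1:ℝ) else -1) = _
    rw [if_pos h]
    cases a ⟨j, hj⟩ <;> simp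
  · simp only [h, if_false]
    show (if (if S j then !(a ⟨j, hj⟩) else a ⟨j, hj⟩) then (1:ℝ) else -1) = _
    rw [if_neg h]

lemma Gam_neg (γ : ℕ → ℝ) (j : ℤ) : Gam γ (-j) = -Gam γ j := by
  unfold Gam
  rcases lt_trichotomy j 0 with h | h | h
  · rw [if_pos (by omega : (0:ℤ) < -j), if_neg (by omega : ¬(0:ℤ) < j), if_pos h]
    simp
  · subst h; norm_num
  · rw [if_neg (by omega : ¬(0:ℤ) < -j), if_pos (by omega : -j < 0), if_pos h]
    simp

lemma sum_odd (F : ℤ → ℝ) (h : ∀ j : ℤ, F (-j) = -F j) :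
    ∑ j ∈ Finset.Icc (-(p:ℤ)) (p:ℤ), F j = 0 := by
  have h0 : F 0 = 0 := by have := h 0; simp at this; linarith
  apply Finset.sum_involution (g := fun j _ => -j)
  case hg₁ => intro j _; have := h j; linarith
  case hg₃ =>
    intro j _ hF hj
    have : j = 0 := by omega
    exact hF (this ▸ h0)
  case g_mem => intro j hj; simp only [Finset.mem_Icc] at hj ⊢; omega
  case hg₄ => intro j _; simp

end S6

-- appended to stage1
namespace S6
variable {p : ℕ}

/-- symmetric above threshold t : entries at ±r agree for all r > t -/
def symA (p t : ℕ) (a : QStr p) : Prop :=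
  ∀ r : ℕ, t < r → ent p a (-(r:ℤ)) = ent p a (r:ℤ)

lemma symA_mono {t t' : ℕ} {a : QStr p} (h : symA p t a) (ht : t ≤ t') : symA p t' a :=
  fun r hr => h r (lt_of_le_of_lt ht hr)

lemma symA_negj {t : ℕ} {a : QStr p} (h : symA p t a) {j : ℤ} (hj : (t:ℤ) < |j|) :
    ent p a (-j) = ent p a j := by
  rw [Int.abs_eq_natAbs] at hj
  rcases le_or_gt 0 j with hj0 | hj0
  · have : j = ((j.toNat : ℕ) : ℤ) := by omega
    rw [this]
    exact h j.toNat (by omega)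
  · have : -j = (((-j).toNat : ℕ) : ℤ) := by omega
    have h2 := h (-j).toNat (by omega)
    rw [← this] at h2
    rw [← h2]
    congr 1
    omega

lemma symB_iff_symA (a : QStr p) : symB p a ↔ symA p 0 a := by
  constructor
  · intro h r hr
    by_cases hrp : (r:ℤ) ≤ (p:ℤ)
    · exact h r (Finset.mem_Icc.mpr ⟨by omega, hrp⟩)
    · rw [ent_out (by simp only [Finset.mem_Icc]; omega),
        ent_out (by simp only [Finset.mem_Icc]; omega)]
  · intro h r hr
    simp only [Finset.mem_Icc] at hr
    have : r = ((r.toNat : ℕ) : ℤ) := by omega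
    rw [this]
    exact h r.toNat (by omega)

/-- the sign-flip set for threshold t -/
def St (t : ℕ) : ℤ → Prop := fun j => 1 ≤ |j| ∧ |j| ≤ (t:ℤ)

lemma St_iff (t : ℕ) (j : ℤ) : St t j ↔ 1 ≤ j.natAbs ∧ j.natAbs ≤ t := by
  unfold St
  rw [Int.abs_eq_natAbs]
  omega

/-- σ_t : negate entries with 1 ≤ |j| ≤ t -/
def sg (p t : ℕ) (a : QStr p) : QStr p := flp p (St t) a

lemma ent_sg {t : ℕ} {j : ℤ} (hj : j ∈ Finset.Icc (-(p:ℤ)) (p:ℤ)) (a : QStr p) :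
    ent p (sg p t a) j = if St t j then -(ent p a j) else ent p a j := ent_flp hj a

lemma sg_sg (t : ℕ) (a : QStr p) : sg p t (sg p t a) = a := flp_flp _ a

lemma symA_sg {t : ℕ} {a : QStr p} (h : symA p t a) : symA p t (sg p t a) := by
  intro r hr
  by_cases hrp : (r:ℤ) ∈ Finset.Icc (-(p:ℤ)) (p:ℤ)
  · have hrn : (-(r:ℤ)) ∈ Finset.Icc (-(p:ℤ)) (p:ℤ) := by
      simp only [Finset.mem_Icc] at hrp ⊢; omega
    rw [ent_sg hrp, ent_sg hrn]
    have hs : ¬ St t (r:ℤ) := by simp only [St_iff]; omega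
    have hs' : ¬ St t (-(r:ℤ)) := by simp only [St_iff]; omega
    rw [if_neg hs, if_neg hs']
    exact h r hr
  · rw [ent_out hrp, ent_out (by simp only [Finset.mem_Icc] at hrp ⊢; omega)]

/-- T(c) as a natural number: the largest 1 ≤ r ≤ p with c_r ≠ c_{-r} (0 if none) -/
def fset (p : ℕ) (c : QStr p) : Finset ℕ :=
  (Finset.Icc 1 p).filter (fun r : ℕ => ent p c (r:ℤ) ≠ ent p c (-(r:ℤ)))

def Tn (p : ℕ) (c : QStr p) : ℕ :=
  if h : (fset p c).Nonempty then (fset p c).max' h else 0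

lemma Tn_spec {c : QStr p} (h : ¬ symA p 0 c) :
    1 ≤ Tn p c ∧ Tn p c ≤ p ∧ ent p c ((Tn p c : ℕ) : ℤ) ≠ ent p c (-(Tn p c : ℤ))
      ∧ symA p (Tn p c) c := by
  have hne : (fset p c).Nonempty := by
    simp only [symA, not_forall] at h
    obtain ⟨r, hr, hne⟩ := h
    refine ⟨r, ?_⟩
    unfold fset
    simp only [Finset.mem_filter, Finset.mem_Icc]
    refine ⟨⟨hr, ?_⟩, fun he => hne he.symm⟩
    by_contra hrp
    exact hne (by rw [ent_out (by simp only [Finset.mem_Icc]; omega),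
      ent_out (by simp only [Finset.mem_Icc]; omega)])
  have hT : Tn p c = (fset p c).max' hne := by unfold Tn; rw [dif_pos hne]
  have hmem := (fset p c).max'_mem hne
  rw [← hT] at hmem
  unfold fset at hmem
  simp only [Finset.mem_filter, Finset.mem_Icc] at hmem
  refine ⟨hmem.1.1, hmem.1.2, hmem.2, ?_⟩
  intro r hr
  by_cases hrp : r ≤ p
  · by_contra hne2
    have : r ∈ fset p c := by
      unfold fset
      simp only [Finset.mem_filter, Finset.mem_Icc]
      exact ⟨⟨by omega, hrp⟩, fun he => hne2 he.symm⟩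
    have := (fset p c).le_max' r this
    rw [← hT] at this
    omega
  · rw [ent_out (by simp only [Finset.mem_Icc]; omega),
      ent_out (by simp only [Finset.mem_Icc]; omega)]

lemma fset_sg (t : ℕ) (c : QStr p) : fset p (sg p t c) = fset p c := by
  unfold fset
  apply Finset.filter_congr
  intro r hr
  simp only [Finset.mem_Icc] at hr
  have hrp : (r:ℤ) ∈ Finset.Icc (-(p:ℤ)) (p:ℤ) := by simp only [Finset.mem_Icc]; omega
  have hrn : (-(r:ℤ)) ∈ Finset.Icc (-(p:ℤ)) (p:ℤ) := by simp only [Finset.mem_Icc]; omega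
  rw [ent_sg hrp, ent_sg hrn]
  have : St t (r:ℤ) ↔ St t (-(r:ℤ)) := by simp only [St_iff]; omega
  by_cases hs : St t (r:ℤ)
  · rw [if_pos hs, if_pos (this.mp hs)]
    simp
  · rw [if_neg hs, if_neg (fun hh => hs (this.mpr hh))]

lemma Tn_sg (t : ℕ) (c : QStr p) : Tn p (sg p t c) = Tn p c := by
  unfold Tn
  rw [fset_sg]

lemma not_symA_sg {c : QStr p} (h : ¬ symA p 0 c) : ¬ symA p 0 (sg p (Tn p c) c) := by
  obtain ⟨h1, h2, h3, _⟩ := Tn_spec h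
  intro hsym
  set s := Tn p c
  have hsp : ((s:ℕ):ℤ) ∈ Finset.Icc (-(p:ℤ)) (p:ℤ) := by simp only [Finset.mem_Icc]; omega
  have hsn : (-(s:ℤ)) ∈ Finset.Icc (-(p:ℤ)) (p:ℤ) := by simp only [Finset.mem_Icc]; omega
  have := hsym s (by omega)
  rw [ent_sg hsp, ent_sg hsn, if_pos (by simp only [St_iff]; omega), if_pos (by simp only [St_iff]; omega)] at this
  exact h3 (by linarith)

end S6

namespace S6
variable {p : ℕ}

def gA (p : ℕ) (γ : ℕ → ℝ) (S : ℤ → Prop) (b c : QStr p) : ℝ :=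
  ∑ j ∈ Finset.Icc (-(p:ℤ)) (p:ℤ), if S j then Gam γ j * ent p b j * ent p c j else 0

def gB (p : ℕ) (γ : ℕ → ℝ) (S : ℤ → Prop) (b c : QStr p) : ℝ :=
  ∑ j ∈ Finset.Icc (-(p:ℤ)) (p:ℤ), if S j then 0 else Gam γ j * ent p b j * ent p c j

lemma neg_ite_sum {s : Finset ℤ} {S : ℤ → Prop} {t : ℤ → ℝ} :
    ∑ j ∈ s, (if S j then -(t j) else 0) = -(∑ j ∈ s, if S j then t j else 0) := by
  rw [← Finset.sum_neg_distrib]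
  apply Finset.sum_congr rfl
  intro j _
  by_cases h : S j <;> simp [h]

lemma gdot_split (γ : ℕ → ℝ) (S : ℤ → Prop) (b c : QStr p) :
    Gdot p γ b c = gA p γ S b c + gB p γ S b c := by
  unfold Gdot gA gB
  rw [← Finset.sum_add_distrib]
  apply Finset.sum_congr rfl
  intro j _
  by_cases h : S j <;> simp [h]

lemma gdot_flp_left (γ : ℕ → ℝ) (S : ℤ → Prop) (b c : QStr p) :
    Gdot p γ (flp p S b) c = -(gA p γ S b c) + gB p γ S b c := by
  unfold Gdot gA gB
  rw [← neg_ite_sum, ← Finset.sum_add_distrib]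
  apply Finset.sum_congr rfl
  intro j hj
  rw [ent_flp hj]
  by_cases h : S j <;> simp [h] <;> ring

lemma gdot_flp_right (γ : ℕ → ℝ) (S : ℤ → Prop) (b c : QStr p) :
    Gdot p γ b (flp p S c) = -(gA p γ S b c) + gB p γ S b c := by
  unfold Gdot gA gB
  rw [← neg_ite_sum, ← Finset.sum_add_distrib]
  apply Finset.sum_congr rfl
  intro j hj
  rw [ent_flp hj]
  by_cases h : S j <;> simp [h] <;> ring

lemma gB_zero (γ : ℕ → ℝ) {S : ℤ → Prop} (hS : ∀ j, S (-j) ↔ S j) {b c : QStr p}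
    (hsym : ∀ j : ℤ, ¬ S j → ent p b (-j) * ent p c (-j) = ent p b j * ent p c j) :
    gB p γ S b c = 0 := by
  apply sum_odd
  intro j
  by_cases h : S j
  · rw [if_pos h, if_pos ((hS j).mpr h)]
    ring
  · rw [if_neg h, if_neg (fun hh => h ((hS j).mp hh))]
    rw [Gam_neg, mul_assoc, mul_assoc, hsym j h]
    ring

lemma gdot_symzero (γ : ℕ → ℝ) {b c : QStr p} (hb : symA p 0 b) (hc : symA p 0 c) :
    Gdot p γ b c = 0 := by
  apply sum_odd
  intro j
  by_cases hj : j = 0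
  · subst hj
    have : Gam γ 0 = 0 := by simp [Gam]
    simp [this]
  · have habs : (0:ℤ) < |j| := abs_pos.mpr hj
    rw [Gam_neg, symA_negj hb (by exact_mod_cast habs), symA_negj hc (by exact_mod_cast habs)]
    ring

lemma sg_ne {c : QStr p} (h : ¬ symA p 0 c) : sg p (Tn p c) c ≠ c := by
  obtain ⟨h1, h2, h3, _⟩ := Tn_spec h
  intro heq
  have hsp : ((Tn p c : ℕ) : ℤ) ∈ Finset.Icc (-(p:ℤ)) (p:ℤ) := by
    simp only [Finset.mem_Icc]; omega
  have := congrArg (fun x => ent p x ((Tn p c : ℕ) : ℤ)) heq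
  rw [ent_sg hsp, if_pos (by simp only [St_iff]; omega)] at this
  exact ent_ne_neg c _ this.symm

lemma pair_reduce (w : QStr p → ℂ)
    (hpair : ∀ c : QStr p, ¬ symA p 0 c → w (sg p (Tn p c) c) = -w c) :
    ∑ c : QStr p, w c = ∑ c ∈ Finset.univ.filter (fun c => symA p 0 c), w c := by
  rw [← Finset.sum_filter_add_sum_filter_not Finset.univ (fun c => symA p 0 c) w]
  have hz : ∑ c ∈ Finset.univ.filter (fun c => ¬ symA p 0 c), w c = 0 := by
    apply Finset.sum_involution (g := fun c _ => sg p (Tn p c) c)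
    case hg₁ =>
      intro c hc
      simp only [Finset.mem_filter] at hc
      rw [hpair c hc.2]
      ring
    case hg₃ =>
      intro c hc _
      simp only [Finset.mem_filter] at hc
      exact sg_ne hc.2
    case g_mem =>
      intro c hc
      simp only [Finset.mem_filter, Finset.mem_univ, true_and] at hc ⊢
      exact not_symA_sg hc
    case hg₄ =>
      intro c _
      rw [Tn_sg]
      exact sg_sg _ _
  rw [hz, add_zero]

end S6

namespace S6
variable {p : ℕ}

lemma ent_sg_flip (t : ℕ) (c : QStr p) (j : ℤ) (h1 : 1 ≤ j.natAbs) (h2 : j.natAbs ≤ t)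
    (h3 : j.natAbs ≤ p) : ent p (sg p t c) j = -(ent p c j) := by
  have hj : j ∈ Finset.Icc (-(p:ℤ)) (p:ℤ) := by simp only [Finset.mem_Icc]; omega
  rw [ent_sg hj, if_pos ((St_iff t j).mpr ⟨h1, h2⟩)]

lemma ent_sg_fix (t : ℕ) (c : QStr p) (j : ℤ) (h : j.natAbs < 1 ∨ t < j.natAbs) :
    ent p (sg p t c) j = ent p c j := by
  by_cases hj : j ∈ Finset.Icc (-(p:ℤ)) (p:ℤ)
  · rw [ent_sg hj, if_neg (fun hs => by rw [St_iff] at hs; omega)]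
  · rw [ent_out hj, ent_out hj]

lemma bket_negneg (x y b : ℝ) : bket (-x) (-y) b = bket x y b := by
  unfold bket
  by_cases h : x = y
  · rw [if_pos (by rw [h]), if_pos h]
  · rw [if_neg (fun hh => h (neg_inj.mp hh)), if_neg h]

lemma bket_pair_neg (x d : ℝ) (hx : x = 1 ∨ x = -1) (hd : d = 1 ∨ d = -1) (b : ℝ) :
    bket (-x) d b * bket d x (-b) = -(bket x d b * bket d (-x) (-b)) := by
  rcases hx with h1 | h1 <;> rcases hd with h2 | h2 <;> subst h1 <;> subst h2 <;>
    norm_num [bket, Real.sin_neg, Real.cos_neg, Complex.ofReal_neg] <;> ring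

lemma pm_resolve {x y : ℝ} (hx : x = 1 ∨ x = -1) (hy : y = 1 ∨ y = -1) (h : x ≠ y) :
    y = -x := by
  rcases hx with h1 | h1 <;> rcases hy with h2 | h2 <;> subst h1 <;> subst h2 <;>
    norm_num at *

lemma fQ_sg (β : ℕ → ℝ) {s : ℕ} {c : QStr p} (hs1 : 1 ≤ s) (hsp : s ≤ p)
    (hneq : ent p c ((s:ℕ):ℤ) ≠ ent p c (-(s:ℤ))) (hsym : symA p s c) :
    fQ p β (sg p s c) = -(fQ p β c) := by
  have hsmem : s ∈ Finset.Icc 1 p := Finset.mem_Icc.mpr ⟨hs1, hsp⟩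
  unfold fQ
  rw [← Finset.mul_prod_erase _ _ hsmem, ← Finset.mul_prod_erase _ _ hsmem]
  have htail : (∏ r ∈ (Finset.Icc 1 p).erase s,
      (bket (ent p (sg p s c) (r : ℤ)) (ent p (sg p s c) (if r = p then 0 else (r : ℤ) + 1)) (β r) *
        bket (ent p (sg p s c) (if r = p then 0 else -((r : ℤ) + 1))) (ent p (sg p s c) (-(r : ℤ))) (-(β r)))) =
      ∏ r ∈ (Finset.Icc 1 p).erase s,
      (bket (ent p c (r : ℤ)) (ent p c (if r = p then 0 else (r : ℤ) + 1)) (β r) *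
        bket (ent p c (if r = p then 0 else -((r : ℤ) + 1))) (ent p c (-(r : ℤ))) (-(β r))) := by
    apply Finset.prod_congr rfl
    intro r hrm
    have hr1p : 1 ≤ r ∧ r ≤ p := Finset.mem_Icc.mp (Finset.mem_of_mem_erase hrm)
    have hrs : r ≠ s := Finset.ne_of_mem_erase hrm
    by_cases hrp : r = p
    · -- r = p > s (since s ≠ p here)
      have hslt : s < p := by omega
      simp only [if_pos hrp]
      rw [ent_sg_fix s c ((r:ℕ):ℤ) (by omega), ent_sg_fix s c 0 (by omega),
        ent_sg_fix s c (-((r:ℕ):ℤ)) (by omega)]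
    · rw [if_neg hrp, if_neg hrp]
      rcases lt_or_gt_of_ne hrs with hlt | hgt
      · rw [ent_sg_flip s c ((r:ℕ):ℤ) (by omega) (by omega) (by omega),
          ent_sg_flip s c (((r:ℕ):ℤ) + 1) (by omega) (by omega) (by omega),
          ent_sg_flip s c (-(((r:ℕ):ℤ) + 1)) (by omega) (by omega) (by omega),
          ent_sg_flip s c (-((r:ℕ):ℤ)) (by omega) (by omega) (by omega),
          bket_negneg, bket_negneg]
      · rw [ent_sg_fix s c ((r:ℕ):ℤ) (by omega),
          ent_sg_fix s c (((r:ℕ):ℤ) + 1) (by omega),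
          ent_sg_fix s c (-(((r:ℕ):ℤ) + 1)) (by omega),
          ent_sg_fix s c (-((r:ℕ):ℤ)) (by omega)]
  rw [htail]
  have hx := ent_pm c ((s:ℕ):ℤ)
  have hy := ent_pm c (-((s:ℕ):ℤ))
  have hyx : ent p c (-((s:ℕ):ℤ)) = -(ent p c ((s:ℕ):ℤ)) := pm_resolve hx hy hneq
  by_cases hsp' : s = p
  · simp only [if_pos hsp']
    rw [ent_sg_flip s c ((s:ℕ):ℤ) (by omega) (by omega) (by omega),
      ent_sg_flip s c (-((s:ℕ):ℤ)) (by omega) (by omega) (by omega),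
      ent_sg_fix s c 0 (by omega), hyx, neg_neg]
    rw [bket_pair_neg _ _ hx (ent_pm c 0)]
    ring
  · rw [if_neg hsp', if_neg hsp']
    have hd : ent p c (-(((s:ℕ):ℤ) + 1)) = ent p c (((s:ℕ):ℤ) + 1) := by
      have := hsym (s+1) (by omega)
      push_cast at this ⊢
      convert this using 2 <;> push_cast <;> ring
    rw [ent_sg_flip s c ((s:ℕ):ℤ) (by omega) (by omega) (by omega),
      ent_sg_flip s c (-((s:ℕ):ℤ)) (by omega) (by omega) (by omega),
      ent_sg_fix s c (((s:ℕ):ℤ) + 1) (by omega),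
      ent_sg_fix s c (-(((s:ℕ):ℤ) + 1)) (by omega),
      hyx, neg_neg, hd]
    rw [bket_pair_neg _ _ hx (ent_pm c (((s:ℕ):ℤ) + 1))]
    ring

end S6

namespace S6
variable {p : ℕ}

lemma pair_zero (w : QStr p → ℂ)
    (hpair : ∀ c : QStr p, ¬ symA p 0 c → w (sg p (Tn p c) c) = -w c)
    (hzero : ∀ c : QStr p, symA p 0 c → w c = 0) : ∑ c : QStr p, w c = 0 := by
  rw [pair_reduce w hpair]
  apply Finset.sum_eq_zero
  intro c hc
  simp only [Finset.mem_filter] at hc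
  exact hzero c hc.2

lemma symA_negj' {t : ℕ} {a : QStr p} (h : symA p t a) {j : ℤ} (hj : t < j.natAbs) :
    ent p a (-j) = ent p a j :=
  symA_negj h (by rw [Int.abs_eq_natAbs]; omega)

lemma HD_succ (β γ : ℕ → ℝ) (D m : ℕ) (a : QStr p) :
    HD p β γ D (m+1) a = (∑ b : QStr p, fQ p β b * HD p β γ D m b *
        (Real.cos ((1 / Real.sqrt D) * Gdot p γ a b) : ℂ)) ^ D := rfl

lemma St_neg_iff (t : ℕ) (j : ℤ) : St t (-j) ↔ St t j := by
  simp only [St_iff]; omega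

/-- gB vanishes when b is symmetric above t and c symmetric above s ≤ t -/
lemma gB_zero' (γ : ℕ → ℝ) {t s : ℕ} {b c : QStr p} (hb : symA p t b) (hc : symA p s c)
    (hst : s ≤ t) : gB p γ (St t) b c = 0 := by
  apply gB_zero γ (St_neg_iff t)
  intro j hj
  by_cases hj0 : j = 0
  · subst hj0; norm_num
  · have habs : t < j.natAbs := by
      rw [St_iff] at hj
      have := Int.natAbs_pos.mpr hj0
      omega
    rw [symA_negj' hb habs, symA_negj' hc (by omega)]

lemma gA_sg (γ : ℕ → ℝ) {t s : ℕ} (hts : t ≤ s) (b c : QStr p) :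
    gA p γ (St t) b (sg p s c) = -(gA p γ (St t) b c) := by
  unfold gA
  rw [← neg_ite_sum]
  apply Finset.sum_congr rfl
  intro j hj
  simp only [Finset.mem_Icc] at hj
  by_cases h : St t j
  · have h' := (St_iff t j).mp h
    rw [if_pos h, if_pos h, ent_sg_flip s c j (by omega) (by omega) (by omega)]
    ring
  · rw [if_neg h, if_neg h]

lemma gB_sg (γ : ℕ → ℝ) {t s : ℕ} (hts : t ≤ s) {b c : QStr p}
    (hb : symA p t b) (hc : symA p s c) :
    gB p γ (St t) b (sg p s c) = -(gB p γ (St t) b c) := by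
  have hsum : gB p γ (St t) b (sg p s c) + gB p γ (St t) b c = 0 := by
    unfold gB
    rw [← Finset.sum_add_distrib]
    have hcongr : ∀ j ∈ Finset.Icc (-(p:ℤ)) (p:ℤ),
        ((if St t j then 0 else Gam γ j * ent p b j * ent p (sg p s c) j) +
          (if St t j then 0 else Gam γ j * ent p b j * ent p c j)) =
        (if ¬ St t j ∧ ¬ St s j then 2 * (Gam γ j * ent p b j * ent p c j) else 0) := by
      intro j hj
      simp only [Finset.mem_Icc] at hj
      by_cases h : St t j
      · rw [if_pos h, if_pos h, if_neg (by tauto)]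
        norm_num
      · rw [if_neg h, if_neg h]
        by_cases h2 : St s j
        · have h2' := (St_iff s j).mp h2
          rw [ent_sg_flip s c j (by omega) (by omega) (by omega), if_neg (by tauto)]
          ring
        · rw [ent_sg_fix s c j (by rw [St_iff] at h2; omega), if_pos ⟨h, h2⟩]
          ring
    rw [Finset.sum_congr rfl hcongr]
    apply sum_odd
    intro j
    by_cases hj0 : j = 0
    · subst hj0
      have : Gam γ 0 = 0 := by simp [Gam]
      simp [this]
    · have hiff : (¬ St t (-j) ∧ ¬ St s (-j)) ↔ (¬ St t j ∧ ¬ St s j) := by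
        simp only [St_iff]; omega
      by_cases h : ¬ St t j ∧ ¬ St s j
      · rw [if_pos (hiff.mpr h), if_pos h]
        have habs : 1 ≤ j.natAbs := Int.natAbs_pos.mpr hj0
        simp only [St_iff] at h
        have h1 : t < j.natAbs := by omega
        have h2 : s < j.natAbs := by omega
        rw [Gam_neg, symA_negj' hb h1, symA_negj' hc h2]
        ring
      · rw [if_neg (fun hh => h (hiff.mp hh)), if_neg h]
        norm_num
  linarith

/-- The invariance of the iterates under σ_t applied to strings symmetric above t. -/
lemma HD_sg (β γ : ℕ → ℝ) (D : ℕ) :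
    ∀ m t : ℕ, ∀ b : QStr p, symA p t b →
      HD p β γ D m (sg p t b) = HD p β γ D m b := by
  intro m
  induction m with
  | zero => intro t b _; rfl
  | succ m ih =>
    intro t b hb
    rw [HD_succ, HD_succ]
    refine congrArg (fun z : ℂ => z ^ D) ?_
    rw [← sub_eq_zero, ← Finset.sum_sub_distrib]
    set x : ℝ := 1 / Real.sqrt D with hx
    have trig : ∀ A B : ℝ, Real.cos (x * (-A + B)) - Real.cos (x * (A + B)) =
        2 * Real.sin (x * A) * Real.sin (x * B) := by
      intro A B
      rw [show x * (-A + B) = x * B - x * A by ring, show x * (A + B) = x * B + x * A by ring,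
        Real.cos_sub, Real.cos_add]
      ring
    have key : ∀ c : QStr p,
        fQ p β c * HD p β γ D m c * (Real.cos (x * Gdot p γ (sg p t b) c) : ℂ) -
          fQ p β c * HD p β γ D m c * (Real.cos (x * Gdot p γ b c) : ℂ) =
        fQ p β c * HD p β γ D m c *
          ((2 * Real.sin (x * gA p γ (St t) b c) * Real.sin (x * gB p γ (St t) b c) : ℝ) : ℂ) := by
      intro c
      rw [show Gdot p γ (sg p t b) c = -(gA p γ (St t) b c) + gB p γ (St t) b c from
          gdot_flp_left γ (St t) b c,
        show Gdot p γ b c = gA p γ (St t) b c + gB p γ (St t) b c from gdot_split γ (St t) b c]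
      rw [← mul_sub, ← Complex.ofReal_sub, trig]
    rw [Finset.sum_congr rfl (fun c _ => key c)]
    apply pair_zero
    · -- pairing on non-symmetric c
      intro c hc
      obtain ⟨hs1, hsp, hneq, hsymc⟩ := Tn_spec hc
      set s := Tn p c with hs
      rcases le_or_gt s t with hst | hst
      · -- both sides vanish
        have hz1 : gB p γ (St t) b (sg p s c) = 0 :=
          gB_zero' γ hb (symA_mono (symA_sg hsymc) hst) le_rfl
        have hz2 : gB p γ (St t) b c = 0 := gB_zero' γ hb (symA_mono hsymc hst) le_rfl
        rw [hz1, hz2]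
        norm_num
      · -- s > t : flip signs
        have hA := gA_sg γ (le_of_lt hst) b c (s := s)
        have hB := gB_sg γ (le_of_lt hst) hb hsymc
        rw [hA, hB, fQ_sg β hs1 hsp hneq hsymc, ih s c hsymc]
        rw [mul_neg, mul_neg, Real.sin_neg, Real.sin_neg]
        push_cast
        ring
    · -- symmetric c : gB vanishes
      intro c hc
      have hz : gB p γ (St t) b c = 0 := gB_zero' γ hb hc (Nat.zero_le t)
      rw [hz]
      norm_num

end S6

namespace S6
variable {p : ℕ}

/-- flip the entries at indices ±v -/
def flV (p v : ℕ) (a : QStr p) : QStr p := flp p (fun j => j.natAbs = v) a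

lemma ent_flV_flip (v : ℕ) (c : QStr p) (j : ℤ) (h : j.natAbs = v) (h3 : j.natAbs ≤ p) :
    ent p (flV p v c) j = -(ent p c j) := by
  have hj : j ∈ Finset.Icc (-(p:ℤ)) (p:ℤ) := by simp only [Finset.mem_Icc]; omega
  rw [flV, ent_flp hj, if_pos h]

lemma ent_flV_fix (v : ℕ) (c : QStr p) (j : ℤ) (h : j.natAbs ≠ v) :
    ent p (flV p v c) j = ent p c j := by
  by_cases hj : j ∈ Finset.Icc (-(p:ℤ)) (p:ℤ)
  · rw [flV, ent_flp hj, if_neg h]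
  · rw [ent_out hj, ent_out hj]

lemma flV_flV (v : ℕ) (c : QStr p) : flV p v (flV p v c) = c := flp_flp _ c

lemma symA0_flV (v : ℕ) {c : QStr p} (hc : symA p 0 c) : symA p 0 (flV p v c) := by
  intro r hr
  by_cases h : (r:ℕ) = v  -- whether natAbs matches
  · by_cases hrp : r ≤ p
    · rw [ent_flV_flip v c (-(r:ℤ)) (by omega) (by omega),
        ent_flV_flip v c ((r:ℕ):ℤ) (by omega) (by omega), hc r hr]
    · rw [ent_out (by simp only [Finset.mem_Icc]; omega),
        ent_out (by simp only [Finset.mem_Icc]; omega)]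
  · rw [ent_flV_fix v c (-(r:ℤ)) (by omega), ent_flV_fix v c ((r:ℕ):ℤ) (by omega)]
    exact hc r hr

/-- the per-edge factor of fQ -/
def Ff (p : ℕ) (β : ℕ → ℝ) (a : QStr p) (r : ℕ) : ℂ :=
  bket (ent p a (r : ℤ)) (ent p a (if r = p then 0 else (r : ℤ) + 1)) (β r) *
    bket (ent p a (if r = p then 0 else -((r : ℤ) + 1))) (ent p a (-(r : ℤ))) (-(β r))

lemma fQ_eq (β : ℕ → ℝ) (a : QStr p) :
    fQ p β a = (1 / 2 : ℂ) * ∏ r ∈ Finset.Icc 1 p, Ff p β a r := rfl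

lemma Ff_flV_fix (β : ℕ → ℝ) (c : QStr p) {r v : ℕ} (hrp : r < p)
    (hva : v ≠ r) (hvb : v ≠ r + 1) : Ff p β (flV p v c) r = Ff p β c r := by
  unfold Ff
  rw [if_neg (by omega : ¬ r = p), if_neg (by omega : ¬ r = p),
    ent_flV_fix v c ((r:ℕ):ℤ) (by omega), ent_flV_fix v c (((r:ℕ):ℤ) + 1) (by omega),
    ent_flV_fix v c (-(((r:ℕ):ℤ) + 1)) (by omega), ent_flV_fix v c (-((r:ℕ):ℤ)) (by omega)]

lemma bket_pair_one (x : ℝ) (hx : x = 1 ∨ x = -1) (b : ℝ) :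
    bket x 1 b * bket 1 x (-b) + bket x (-1) b * bket (-1) x (-b) = 1 := by
  rcases hx with h | h <;> subst h <;>
    norm_num [bket, Real.sin_neg, Real.cos_neg, Complex.ofReal_neg] <;>
    linear_combination Complex.sin_sq_add_cos_sq (b : ℂ) -
      Complex.sin (b : ℂ) ^ 2 * Complex.I_sq

/-- generic marginalization step -/
lemma marg (s : Finset (QStr p)) (v : ℕ) (hv : v ≤ p) (g h : QStr p → ℂ)
    (hmem : ∀ c ∈ s, flV p v c ∈ s)
    (hval : ∀ c ∈ s, ent p c ((v:ℕ):ℤ) = 1 → g c + g (flV p v c) = h c) :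
    ∑ c ∈ s, g c = ∑ c ∈ s.filter (fun c => ent p c ((v:ℕ):ℤ) = 1), h c := by
  rw [← Finset.sum_filter_add_sum_filter_not s (fun c => ent p c ((v:ℕ):ℤ) = 1) g]
  have hbij : ∑ c ∈ s.filter (fun c => ¬ ent p c ((v:ℕ):ℤ) = 1), g c =
      ∑ c ∈ s.filter (fun c => ent p c ((v:ℕ):ℤ) = 1), g (flV p v c) := by
    apply Finset.sum_nbij' (i := flV p v) (j := flV p v)
    · intro c hc
      simp only [Finset.mem_filter] at hc ⊢
      refine ⟨hmem c hc.1, ?_⟩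
      rw [ent_flV_flip v c ((v:ℕ):ℤ) (by omega) (by omega)]
      rcases ent_pm c ((v:ℕ):ℤ) with h1 | h1
      · exact absurd h1 hc.2
      · rw [h1]; norm_num
    · intro c hc
      simp only [Finset.mem_filter] at hc ⊢
      refine ⟨hmem c hc.1, ?_⟩
      rw [ent_flV_flip v c ((v:ℕ):ℤ) (by omega) (by omega), hc.2]
      norm_num
    · intro c _; exact flV_flV v c
    · intro c _; exact flV_flV v c
    · intro c _; rw [flV_flV]
  rw [hbij, ← Finset.sum_add_distrib]
  apply Finset.sum_congr rfl
  intro c hc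
  simp only [Finset.mem_filter] at hc
  exact hval c hc.1 hc.2

end S6

namespace S6
variable {p : ℕ}

def Cset (p k : ℕ) : Finset (QStr p) :=
  Finset.univ.filter (fun c => symA p 0 c ∧ ent p c 0 = 1 ∧
    ∀ r : ℕ, k + 1 < r → ent p c ((r:ℕ):ℤ) = 1)

def Wk (p : ℕ) (β : ℕ → ℝ) (k : ℕ) : ℂ :=
  ∑ c ∈ Cset p k, ∏ r ∈ Finset.Icc 1 k, Ff p β c r

lemma Icc_erase (k : ℕ) (hk : 1 ≤ k) : (Finset.Icc 1 k).erase k = Finset.Icc 1 (k-1) := by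
  ext r
  simp only [Finset.mem_erase, Finset.mem_Icc]
  omega

/-- step 1 : integrate out the vertex 0 along the edge p -/
lemma step1 (β : ℕ → ℝ) (hp : 1 ≤ p) :
    ∑ c ∈ Finset.univ.filter (fun c : QStr p => symA p 0 c), ∏ r ∈ Finset.Icc 1 p, Ff p β c r
      = Wk p β (p - 1) := by
  rw [marg _ 0 (by omega) _ (fun c => ∏ r ∈ Finset.Icc 1 (p-1), Ff p β c r) ?mem ?val]
  case mem =>
    intro c hc
    simp only [Finset.mem_filter, Finset.mem_univ, true_and] at hc ⊢
    exact symA0_flV 0 hc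
  case val =>
    intro c hc h0
    simp only [Finset.mem_filter, Finset.mem_univ, true_and] at hc
    rw [← Finset.mul_prod_erase _ _ (Finset.mem_Icc.mpr ⟨hp, le_rfl⟩ : p ∈ Finset.Icc 1 p),
      ← Finset.mul_prod_erase _ _ (Finset.mem_Icc.mpr ⟨hp, le_rfl⟩ : p ∈ Finset.Icc 1 p),
      Icc_erase p hp]
    have htail : ∏ r ∈ Finset.Icc 1 (p-1), Ff p β (flV p 0 c) r
        = ∏ r ∈ Finset.Icc 1 (p-1), Ff p β c r := by
      apply Finset.prod_congr rfl
      intro r hr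
      simp only [Finset.mem_Icc] at hr
      exact Ff_flV_fix β c (by omega) (by omega) (by omega)
    rw [htail, ← add_mul]
    have hhead : Ff p β c p + Ff p β (flV p 0 c) p = 1 := by
      unfold Ff
      rw [if_pos rfl, if_pos rfl,
        ent_flV_fix 0 c ((p:ℕ):ℤ) (by omega), ent_flV_fix 0 c (-((p:ℕ):ℤ)) (by omega),
        ent_flV_flip 0 c 0 (by omega) (by omega),
        show ent p c (-((p:ℕ):ℤ)) = ent p c ((p:ℕ):ℤ) from hc p (by omega),
        show ent p c 0 = 1 by exact_mod_cast h0]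
      norm_num
      exact bket_pair_one _ (ent_pm c ((p:ℕ):ℤ)) _
    rw [hhead, one_mul]
  · -- sets agree
    apply Finset.sum_congr _ (fun c _ => rfl)
    unfold Cset
    rw [Finset.filter_filter]
    apply Finset.filter_congr
    intro c _
    constructor
    · rintro ⟨h1, h2⟩
      refine ⟨h1, h2, ?_⟩
      intro r hr
      apply ent_out
      simp only [Finset.mem_Icc]
      omega
    · rintro ⟨h1, h2, _⟩
      exact ⟨h1, h2⟩

/-- the inductive step : integrate out the vertex k+1 along the edge k -/
lemma stepk (β : ℕ → ℝ) {k : ℕ} (hk : 1 ≤ k) (hkp : k ≤ p - 1) (hp : 1 ≤ p) :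
    Wk p β k = Wk p β (k - 1) := by
  unfold Wk
  rw [marg _ (k+1) (by omega) _ (fun c => ∏ r ∈ Finset.Icc 1 (k-1), Ff p β c r) ?mem ?val]
  case mem =>
    intro c hc
    unfold Cset at hc ⊢
    simp only [Finset.mem_filter, Finset.mem_univ, true_and] at hc ⊢
    obtain ⟨h1, h2, h3⟩ := hc
    refine ⟨symA0_flV _ h1, ?_, ?_⟩
    · rw [ent_flV_fix (k+1) c 0 (by omega)]; exact h2
    · intro r hr
      rw [ent_flV_fix (k+1) c ((r:ℕ):ℤ) (by omega)]
      exact h3 r hr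
  case val =>
    intro c hc hval
    unfold Cset at hc
    simp only [Finset.mem_filter, Finset.mem_univ, true_and] at hc
    obtain ⟨h1, h2, h3⟩ := hc
    rw [← Finset.mul_prod_erase _ _ (Finset.mem_Icc.mpr ⟨hk, le_rfl⟩ : k ∈ Finset.Icc 1 k),
      ← Finset.mul_prod_erase _ _ (Finset.mem_Icc.mpr ⟨hk, le_rfl⟩ : k ∈ Finset.Icc 1 k),
      Icc_erase k hk]
    have htail : ∏ r ∈ Finset.Icc 1 (k-1), Ff p β (flV p (k+1) c) r
        = ∏ r ∈ Finset.Icc 1 (k-1), Ff p β c r := by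
      apply Finset.prod_congr rfl
      intro r hr
      simp only [Finset.mem_Icc] at hr
      exact Ff_flV_fix β c (by omega) (by omega) (by omega)
    rw [htail, ← add_mul]
    have hhead : Ff p β c k + Ff p β (flV p (k+1) c) k = 1 := by
      unfold Ff
      rw [if_neg (by omega : ¬ k = p), if_neg (by omega : ¬ k = p),
        ent_flV_fix (k+1) c ((k:ℕ):ℤ) (by omega), ent_flV_fix (k+1) c (-((k:ℕ):ℤ)) (by omega),
        ent_flV_flip (k+1) c (((k:ℕ):ℤ) + 1) (by omega) (by omega),
        ent_flV_flip (k+1) c (-(((k:ℕ):ℤ) + 1)) (by omega) (by omega),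
        show ent p c (-(((k:ℕ):ℤ)+1)) = ent p c (((k:ℕ):ℤ)+1) by
          have := h1 (k+1) (by omega); push_cast at this ⊢; convert this using 2 <;> push_cast <;> ring,
        show ent p c (-((k:ℕ):ℤ)) = ent p c ((k:ℕ):ℤ) from h1 k (by omega)]
      rw [show ent p c (((k:ℕ):ℤ)+1) = 1 from by push_cast at hval ⊢; exact hval]
      norm_num
      exact bket_pair_one _ (ent_pm c ((k:ℕ):ℤ)) _
    rw [hhead, one_mul]
  · apply Finset.sum_congr _ (fun c _ => rfl)
    unfold Cset
    rw [Finset.filter_filter]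
    apply Finset.filter_congr
    intro c _
    constructor
    · rintro ⟨⟨h1, h2, h3⟩, h4⟩
      refine ⟨h1, h2, ?_⟩
      intro r hr
      rcases Nat.lt_or_ge (k+1) r with h | h
      · exact h3 r h
      · have : r = k + 1 := by omega
        subst this
        push_cast at h4 ⊢
        exact h4
    · rintro ⟨h1, h2, h3⟩
      refine ⟨⟨h1, h2, fun r hr => h3 r (by omega)⟩, ?_⟩
      have := h3 (k+1) (by omega)
      push_cast at this ⊢
      exact this

end S6

namespace S6
variable {p : ℕ}

/-- the two strings (all-ones up to sign at |j| = 1) -/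
def cB (p : ℕ) (b : Bool) : QStr p := fun j => if j.1.natAbs = 1 then b else true

lemma ent_cB (b : Bool) {j : ℤ} (hj : j ∈ Finset.Icc (-(p:ℤ)) (p:ℤ)) :
    ent p (cB p b) j = if j.natAbs = 1 then (if b then (1:ℝ) else -1) else 1 := by
  rw [ent_mem hj]
  show (if (if j.natAbs = 1 then b else true) then (1:ℝ) else -1) = _
  by_cases h : j.natAbs = 1
  · rw [if_pos h, if_pos h]
  · rw [if_neg h, if_neg h, if_pos rfl]

lemma c_of_ent_one {c : QStr p} {j : ℤ} (hj : j ∈ Finset.Icc (-(p:ℤ)) (p:ℤ))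
    (h : ent p c j = 1) : c ⟨j, hj⟩ = true := by
  rw [ent_mem hj] at h
  cases hcc : c ⟨j, hj⟩
  · rw [hcc] at h; norm_num at h
  · rfl

lemma c_of_ent_eq {c : QStr p} {j k : ℤ} (hj : j ∈ Finset.Icc (-(p:ℤ)) (p:ℤ))
    (hk : k ∈ Finset.Icc (-(p:ℤ)) (p:ℤ)) (h : ent p c j = ent p c k) :
    c ⟨j, hj⟩ = c ⟨k, hk⟩ := by
  rw [ent_mem hj, ent_mem hk] at h
  cases hcj : c ⟨j, hj⟩ <;> cases hck : c ⟨k, hk⟩ <;> rw [hcj, hck] at h <;>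
    first | rfl | norm_num at h

lemma Cset_zero (hp : 1 ≤ p) : Cset p 0 = {cB p true, cB p false} := by
  have h1mem : (1:ℤ) ∈ Finset.Icc (-(p:ℤ)) (p:ℤ) := by simp only [Finset.mem_Icc]; omega
  have h0mem : (0:ℤ) ∈ Finset.Icc (-(p:ℤ)) (p:ℤ) := by simp only [Finset.mem_Icc]; omega
  ext c
  unfold Cset
  simp only [Finset.mem_filter, Finset.mem_univ, true_and, Finset.mem_insert,
    Finset.mem_singleton]
  constructor
  · rintro ⟨h1, h2, h3⟩
    have hb : c = cB p (c ⟨1, h1mem⟩) := by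
      funext j
      show c j = if j.1.natAbs = 1 then c ⟨1, h1mem⟩ else true
      have hjm := j.2
      simp only [Finset.mem_Icc] at hjm
      by_cases hn : j.1.natAbs = 1
      · rw [if_pos hn]
        rcases (by omega : j.1 = 1 ∨ j.1 = -1) with h | h
        · have : j = ⟨1, h1mem⟩ := Subtype.ext h
          rw [this]
        · have : j = ⟨-1, by simp only [Finset.mem_Icc]; omega⟩ := Subtype.ext h
          rw [this]
          exact c_of_ent_eq _ h1mem (h1 1 (by omega))
      · rw [if_neg hn]
        rcases (by omega : j.1 = 0 ∨ 2 ≤ j.1.natAbs) with h | h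
        · have : j = ⟨0, h0mem⟩ := Subtype.ext h
          rw [this]
          exact c_of_ent_one h0mem (by exact_mod_cast h2)
        · rcases (by omega : j.1 = (j.1.natAbs : ℤ) ∨ j.1 = -(j.1.natAbs : ℤ)) with hh | hh
          · have : j = ⟨((j.1.natAbs : ℕ) : ℤ), by simp only [Finset.mem_Icc]; omega⟩ :=
              Subtype.ext hh
            rw [this]
            exact c_of_ent_one _ (h3 j.1.natAbs (by omega))
          · have : j = ⟨-((j.1.natAbs : ℕ) : ℤ), by simp only [Finset.mem_Icc]; omega⟩ :=
              Subtype.ext hh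
            rw [this]
            apply c_of_ent_one
            rw [h1 j.1.natAbs (by omega)]
            exact h3 j.1.natAbs (by omega)
    cases hcc : c ⟨1, h1mem⟩
    · right; rw [hb, hcc]
    · left; rw [hb, hcc]
  · have hgen : ∀ b : Bool, symA p 0 (cB p b) ∧ ent p (cB p b) 0 = 1 ∧
        ∀ r : ℕ, 0 + 1 < r → ent p (cB p b) ((r:ℕ):ℤ) = 1 := by
      intro b
      refine ⟨?_, ?_, ?_⟩
      · intro r _
        by_cases hrp : r ≤ p
        · rw [ent_cB b (by simp only [Finset.mem_Icc]; omega),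
            ent_cB b (by simp only [Finset.mem_Icc]; omega)]
          have : ((-(r:ℤ)).natAbs = 1) ↔ (((r:ℕ):ℤ).natAbs = 1) := by omega
          by_cases h : ((r:ℕ):ℤ).natAbs = 1
          · rw [if_pos h, if_pos (this.mpr h)]
          · rw [if_neg h, if_neg (fun hh => h (this.mp hh))]
        · rw [ent_out (by simp only [Finset.mem_Icc]; omega),
            ent_out (by simp only [Finset.mem_Icc]; omega)]
      · rw [ent_cB b h0mem, if_neg (by omega)]
      · intro r hr
        by_cases hrp : r ≤ p
        · rw [ent_cB b (by simp only [Finset.mem_Icc]; omega), if_neg (by omega)]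
        · rw [ent_out (by simp only [Finset.mem_Icc]; omega)]
    rintro (rfl | rfl) <;> exact hgen _

lemma cB_ne (hp : 1 ≤ p) : cB p true ≠ cB p false := by
  intro h
  have h1mem : (1:ℤ) ∈ Finset.Icc (-(p:ℤ)) (p:ℤ) := by simp only [Finset.mem_Icc]; omega
  have := congrFun h ⟨1, h1mem⟩
  simp only [cB] at this
  norm_num at this

lemma Wk_zero (β : ℕ → ℝ) (hp : 1 ≤ p) : Wk p β 0 = 2 := by
  unfold Wk
  rw [Cset_zero hp]
  rw [show Finset.Icc 1 0 = (∅ : Finset ℕ) from Finset.Icc_eq_empty (by omega)]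
  simp only [Finset.prod_empty]
  rw [Finset.sum_pair (cB_ne hp)]
  norm_num

lemma sum_fQ (β : ℕ → ℝ) (hp : 1 ≤ p) :
    ∑ c ∈ Finset.univ.filter (fun c : QStr p => symA p 0 c), fQ p β c = 1 := by
  rw [Finset.sum_congr rfl (fun c _ => fQ_eq β c), ← Finset.mul_sum, step1 β hp]
  have hdesc : ∀ k, k ≤ p - 1 → Wk p β k = Wk p β 0 := by
    intro k
    induction k with
    | zero => intro _; rfl
    | succ n ihn =>
      intro h
      have := stepk β (k := n+1) (by omega) h hp
      simp only [Nat.add_sub_cancel] at this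
      rw [this]
      exact ihn (by omega)
  rw [hdesc (p-1) le_rfl, Wk_zero β hp]
  norm_num

/-- main lemma : the iterates are 1 on symmetric strings -/
lemma HD_one (β γ : ℕ → ℝ) (D : ℕ) (hp : 1 ≤ p) :
    ∀ m : ℕ, ∀ a : QStr p, symA p 0 a → HD p β γ D m a = 1 := by
  intro m
  induction m with
  | zero => intro a _; rfl
  | succ m ih =>
    intro a ha
    rw [HD_succ]
    have hred := pair_reduce (fun c => fQ p β c * HD p β γ D m c *
        (Real.cos ((1 / Real.sqrt D) * Gdot p γ a c) : ℂ)) ?_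
    · rw [hred]
      have : ∀ c ∈ Finset.univ.filter (fun c : QStr p => symA p 0 c),
          fQ p β c * HD p β γ D m c * (Real.cos ((1 / Real.sqrt D) * Gdot p γ a c) : ℂ)
            = fQ p β c := by
        intro c hc
        simp only [Finset.mem_filter, Finset.mem_univ, true_and] at hc
        rw [ih c hc, gdot_symzero γ ha hc, mul_zero, Real.cos_zero]
        norm_num
      rw [Finset.sum_congr rfl this, sum_fQ β hp, one_pow]
    · -- the pairing condition
      intro c hc
      obtain ⟨hs1, hsp, hneq, hsymc⟩ := Tn_spec hc
      set s := Tn p c with hs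
      have hgd : Gdot p γ a (sg p s c) = -(Gdot p γ a c) := by
        have h1 : Gdot p γ a (sg p s c) = -(gA p γ (St s) a c) + gB p γ (St s) a c :=
          gdot_flp_right γ (St s) a c
        have h2 : Gdot p γ a c = gA p γ (St s) a c + gB p γ (St s) a c :=
          gdot_split γ (St s) a c
        have h3 : gB p γ (St s) a c = 0 :=
          gB_zero' γ (symA_mono ha (Nat.zero_le s)) hsymc le_rfl
        rw [h1, h2, h3]
        ring
      rw [hgd, fQ_sg β hs1 hsp hneq hsymc, HD_sg β γ D m s c hsymc,
        mul_neg, Real.cos_neg]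
      ring

end S6

end

/-- H_D^{(m)}(a) = 1 for a ∈ B₀ and 0 ≤ m ≤ p. -/
theorem stmt_6 (p : ℕ) (hp : 1 ≤ p) (D : ℕ) (hD : 1 ≤ D) (β γ : ℕ → ℝ)
    (m : ℕ) (hm : m ≤ p) (a : QStr p) (ha : symB p a) :
    HD p β γ D m a = 1 :=
  S6.HD_one β γ D hp m a ((S6.symB_iff_symA a).mp ha)
end
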